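/- For any marked tree \widehat{T} in F(C' → C) (i.e., R(f(\widehat{T})) = C' and R(f(π(\widehat{T}))) = C), one has \hat{μ}(\widehat{T}) = μ(f(\widehat{T})) · W(C' → C), where μ(T) = α^{-l(T)} β^{-r(T)} and \hat{μ} excludes the marked vertex from the counts l, r. -/

import Mathlib

/-- Plane binary trees: every internal vertex has exactly two ordered children. -/
inductive PTree where
  | leaf : PTree
  | node : PTree → PTree → PTree
  deriving DecidableEq

namespace PTree

/-- number of leaves (endpoints) -/
def numLeaves : PTree → ℕ
  | leaf => 1
  | node l r => numLeaves l + numLeaves r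

/-- directions of the leaves of a subtree which is itself a `b`-child
(`true` = left child, `false` = right child), in left-to-right order. -/
def dirsAux : PTree → Bool → List Bool
  | leaf, b => [b]
  | node l r, _ => dirsAux l true ++ dirsAux r false

/-- the left/right-child directions of all leaves of a tree, left to right
(`true` = left child, `false` = right child). -/
def dirs : PTree → List Bool
  | leaf => []
  | node l r => dirsAux l true ++ dirsAux r false

/-- The reduction map `R`: the directions of the 2nd through (n+1)-th leaves;
`true` = • (occupied site, left child), `false` = ∘ (empty site, right child). -/
def red (T : PTree) : List Bool := ((dirs T).drop 1).dropLast

/-- number of internal vertices on the path from the leftmost leaf to the root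
(root included). -/
def lCount : PTree → ℕ
  | leaf => 0
  | node l _ => lCount l + 1

/-- number of internal vertices on the path from the rightmost leaf to the root
(root included). -/
def rCount : PTree → ℕ
  | leaf => 0
  | node _ r => rCount r + 1

/-- number of last branching vertices (internal vertices whose two children are leaves). -/
def lbCount : PTree → ℕ
  | leaf => 0
  | node leaf leaf => 1
  | node l r => lbCount l + lbCount r

end PTree

/-- Marked plane binary trees: a plane binary tree with exactly one of its
last branching vertices marked (the constructor `mark` is the marked vertex,
a vertex with two leaf children). -/
inductive MTree where
  | mark : MTree
  | nodeL : MTree → PTree → MTree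
  | nodeR : PTree → MTree → MTree
  deriving DecidableEq

namespace MTree

/-- forgetful map to plane binary trees -/
def forget : MTree → PTree
  | mark => .node .leaf .leaf
  | nodeL l r => .node (forget l) r
  | nodeR l r => .node l (forget r)

/-- collapse the marked vertex (with its two leaf children) to a single leaf. -/
def collapseT : MTree → PTree
  | mark => .leaf
  | nodeL l r => .node (collapseT l) r
  | nodeR l r => .node l (collapseT r)

/-- index (left to right, starting from 0) of the leaf of `collapseT` obtained
by collapsing the marked vertex. -/
def markIdx : MTree → ℕ
  | mark => 0
  | nodeL l _ => markIdx l
  | nodeR l r => l.numLeaves + markIdx r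

end MTree

/-- replace the `i`-th leaf of a tree by a marked last branching vertex. -/
def expand : PTree → ℕ → MTree
  | .leaf, _ => .mark
  | .node l r, i =>
      if i < l.numLeaves then .nodeL (expand l i) r
      else .nodeR l (expand r (i - l.numLeaves))

/-- index of the next right-child (`false`) leaf strictly after position `i`;
if there is none, the index of the rightmost left-child (`true`) leaf. -/
def nextFalseIdx (w : List Bool) (i : ℕ) : ℕ :=
  if (w.drop (i+1)).findIdx (fun b => !b) < (w.drop (i+1)).length
  then i + 1 + (w.drop (i+1)).findIdx (fun b => !b)
  else w.length - 1 - (w.reverse.findIdx (fun b => b))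

/-- index of the closest left-child (`true`) leaf strictly before position `i`;
if there is none, the index of the leftmost right-child (`false`) leaf. -/
def prevTrueIdx (w : List Bool) (i : ℕ) : ℕ :=
  if ((w.take i).reverse).findIdx (fun b => b) < i
  then i - 1 - ((w.take i).reverse).findIdx (fun b => b)
  else w.findIdx (fun b => !b)

/-- position of the leaf where the removed segment is re-glued by `π`. -/
def target (w : List Bool) (i : ℕ) : ℕ :=
  if w.getD i true then prevTrueIdx w i else nextFalseIdx w i

/-- The map `π` on marked trees: remove the segment joining the marked vertex to
its left (resp. right) leaf when the marked vertex is a right (resp. left) child,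
and glue it to the next right- (resp. left-) child leaf to the right (resp. left),
with the boundary rule when no such leaf exists; the new vertex is marked. -/
def piM (M : MTree) : MTree :=
  expand M.collapseT (target M.collapseT.dirs M.markIdx)

open Classical in
/-- Transition rates of the `n`-site open-boundary TASEP, on configurations
encoded as lists of booleans (`true` = •, `false` = ∘). -/
noncomputable def rate (α β : ℝ) (C C' : List Bool) : ℝ :=
  if ∃ A, C = false :: A ∧ C' = true :: A then α
  else if ∃ A, C = A ++ [true] ∧ C' = A ++ [false] then β
  else if ∃ A A', C = A ++ true :: false :: A' ∧ C' = A ++ false :: true :: A' then 1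
  else 0

/-- number of active bonds of a configuration: injection at site 1 if empty,
extraction at site n if occupied, and hops across •∘ pairs. -/
def activeCount (C : List Bool) : ℕ :=
  (if C.head? = some false then 1 else 0) +
  ((C.zip C.tail).count (true, false)) +
  (if C.getLast? = some true then 1 else 0)

/-- the weight `μ(T) = α^{-l(T)} β^{-r(T)}` of a plane binary tree. -/
noncomputable def mu (α β : ℝ) (T : PTree) : ℝ :=
  α ^ (-(T.lCount : ℤ)) * β ^ (-(T.rCount : ℤ))

/-- number of internal vertices on the path from the leftmost leaf to the root,
excluding the marked vertex. -/
def lCountM : MTree → ℕ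
  | .mark => 0
  | .nodeL l _ => lCountM l + 1
  | .nodeR l _ => l.lCount + 1

/-- number of internal vertices on the path from the rightmost leaf to the root,
excluding the marked vertex. -/
def rCountM : MTree → ℕ
  | .mark => 0
  | .nodeR _ r => rCountM r + 1
  | .nodeL _ r => r.rCount + 1

/-- the weight `μ̂` of a marked tree, excluding the marked vertex from the counts. -/
noncomputable def muHat (α β : ℝ) (M : MTree) : ℝ :=
  α ^ (-(lCountM M : ℤ)) * β ^ (-(rCountM M : ℤ))


/-!
Write `w` for the left/right word of the leaves of the tree `T` obtained by collapsing the marked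
cherry of `T̂` to a leaf, and `i` for the position of that leaf. Both `f(T̂)` and `f(π T̂)`
arise from `T` by expanding one leaf into a cherry, at positions `i` and `target w i`, and a look
at the few letters around these positions shows that their reductions differ by a single TASEP
move: an injection if `i` is the first leaf, an extraction if it is the last one, a hop otherwise.
The extra vertex counted by `μ(f(T̂))` but not by `μ̂(T̂)` lies on the leftmost (rightmost) branch
exactly in the first (last) case, which accounts for the factor `α` (`β`).
-/

section

open List

/-- The leaf word of a tree after its `i`-th leaf has been expanded into a cherry. -/
def sprout (w : List Bool) (i : ℕ) : List Bool := w.take i ++ true :: false :: w.drop (i + 1)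

lemma sprout_of_eq_append_cons {w x y : List Bool} {b : Bool} {i : ℕ}
    (hw : w = x ++ b :: y) (hi : x.length = i) : sprout w i = x ++ true :: false :: y := by
  subst hw hi
  simp [sprout]

lemma sprout_append_of_lt {u v : List Bool} {i : ℕ} (hi : i < u.length) :
    sprout (u ++ v) i = sprout u i ++ v := by
  simp [sprout, take_append_of_le_length hi.le,
    drop_append_of_le_length (show i + 1 ≤ u.length by omega)]

lemma sprout_append_length_add (u v : List Bool) (i : ℕ) :
    sprout (u ++ v) (u.length + i) = u ++ sprout v i := by
  simp [sprout, take_append, drop_append,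
    drop_eq_nil_of_le (show u.length ≤ u.length + i + 1 by omega),
    show u.length + i + 1 - u.length = i + 1 by omega]

lemma exists_eq_replicate_append_cons {b : Bool} {w : List Bool} (h : b ∈ w) :
    ∃ k y, w = replicate k (!b) ++ b :: y := by
  induction w with
  | nil => simp at h
  | cons c t ih =>
    by_cases hc : c = b
    · exact ⟨0, t, by simp [hc]⟩
    · obtain ⟨k, y, rfl⟩ := ih (by simpa [Ne.symm hc] using h)
      exact ⟨k + 1, y, by cases b <;> cases c <;> simp_all [replicate_succ]⟩

lemma exists_eq_append_cons_replicate {b : Bool} {w : List Bool} (h : b ∈ w) :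
    ∃ x k, w = x ++ b :: replicate k (!b) := by
  obtain ⟨k, y, hy⟩ := exists_eq_replicate_append_cons (mem_reverse.mpr h)
  exact ⟨y.reverse, k, by simpa using congrArg reverse hy⟩

lemma replicate_append_cons {α : Type*} (n : ℕ) (a : α) (l : List α) :
    replicate n a ++ a :: l = a :: (replicate n a ++ l) := by
  induction n with
  | zero => rfl
  | succ n ih => simp [replicate_succ, ih]

lemma findIdx_replicate_append_cons {α : Type*} (p : α → Bool) (a b : α) (k : ℕ) (y : List α)
    (ha : p a = false) (hb : p b = true) : (replicate k a ++ b :: y).findIdx p = k := by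
  induction k with
  | zero => simp [findIdx_cons, hb]
  | succ k ih => simp [replicate_succ, findIdx_cons, ha, ih]

lemma target_lt_length {w : List Bool} (hw : false ∈ w) {i : ℕ} (hi : i < w.length) :
    target w i < w.length := by
  unfold target prevTrueIdx nextFalseIdx
  split_ifs with _ h₁ h₂
  · omega
  · exact findIdx_lt_length_of_exists ⟨false, hw, rfl⟩
  · simp only [length_drop] at h₂; omega
  · omega

lemma target_first (k : ℕ) (y : List Bool) :
    target (true :: (replicate k true ++ false :: y)) 0 = k + 1 := by
  simp [target, prevTrueIdx, findIdx_cons, findIdx_replicate_append_cons]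

lemma target_last (x : List Bool) (m : ℕ) :
    target (x ++ true :: replicate (m + 1) false) (x.length + m + 1) = x.length := by
  have hget : (x ++ true :: replicate (m + 1) false).getD (x.length + m + 1) true = false := by
    rw [getD_eq_getElem?_getD, getElem?_append_right (by omega),
      show x.length + m + 1 - x.length = m + 1 by omega]
    simp
  have hdrop : (x ++ true :: replicate (m + 1) false).drop (x.length + m + 1 + 1) = [] :=
    drop_eq_nil_of_le (by simp only [length_append, length_cons, length_replicate]; omega)
  simp only [target, hget, nextFalseIdx, hdrop]
  simp [findIdx_replicate_append_cons]

lemma target_of_true (x z : List Bool) (g : ℕ) :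
    target (x ++ true :: (replicate g false ++ true :: z)) (x.length + g + 1) = x.length := by
  have hget :
      (x ++ true :: (replicate g false ++ true :: z)).getD (x.length + g + 1) true = true := by
    rw [getD_eq_getElem?_getD, getElem?_append_right (by omega),
      show x.length + g + 1 - x.length = g + 1 by omega]
    simp
  have htake : (x ++ true :: (replicate g false ++ true :: z)).take (x.length + g + 1) =
      x ++ true :: replicate g false := by
    simp [take_append, take_of_length_le (show x.length ≤ x.length + g + 1 by omega),
      show x.length + g + 1 - x.length = g + 1 by omega]
  simp only [target, hget, prevTrueIdx, htake]
  simp [findIdx_replicate_append_cons]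

lemma target_of_false (x y : List Bool) (q : ℕ) :
    target (x ++ false :: (replicate q true ++ false :: y)) x.length = x.length + 1 + q := by
  simp [target, nextFalseIdx, findIdx_replicate_append_cons]

lemma rate_injection (α β : ℝ) (A : List Bool) : rate α β (false :: A) (true :: A) = α :=
  if_pos ⟨A, rfl, rfl⟩

-- The other cases of `rate` are excluded by counting particles, which a hop preserves and
-- injection and extraction change.
lemma rate_extraction (α β : ℝ) (A : List Bool) : rate α β (A ++ [true]) (A ++ [false]) = β := by
  rw [rate, if_neg, if_pos ⟨A, rfl, rfl⟩]
  rintro ⟨E, h, h'⟩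
  have := congrArg (count true) h
  have := congrArg (count true) h'
  grind

lemma rate_hop (α β : ℝ) (A B : List Bool) :
    rate α β (A ++ true :: false :: B) (A ++ false :: true :: B) = 1 := by
  rw [rate, if_neg, if_neg, if_pos ⟨A, B, rfl, rfl⟩] <;>
  · rintro ⟨E, h, h'⟩
    have := congrArg (count true) h
    have := congrArg (count true) h'
    grind

lemma rate_trim_injection (α β : ℝ) (a : Bool) {B : List Bool} (hB : B ≠ []) :
    rate α β ((a :: false :: B).drop 1).dropLast ((a :: true :: B).drop 1).dropLast = α := by
  simp [dropLast_cons_of_ne_nil hB, rate_injection]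

lemma rate_trim_extraction (α β : ℝ) {A : List Bool} (hA : A ≠ []) (c : Bool) :
    rate α β ((A ++ [true, c]).drop 1).dropLast ((A ++ [false, c]).drop 1).dropLast = β := by
  have h1 : 1 ≤ A.length := length_pos_iff.mpr hA
  simp [drop_append_of_le_length h1, dropLast_append_of_ne_nil, rate_extraction]

lemma rate_trim_hop (α β : ℝ) {A B : List Bool} (hA : A ≠ []) (hB : B ≠ []) :
    rate α β ((A ++ true :: false :: B).drop 1).dropLast
      ((A ++ false :: true :: B).drop 1).dropLast = 1 := by
  have h1 : 1 ≤ A.length := length_pos_iff.mpr hA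
  simp [drop_append_of_le_length h1, dropLast_append_of_ne_nil, dropLast_cons_of_ne_nil hB,
    rate_hop]

lemma rate_sprout_target_first (α β : ℝ) (k : ℕ) (y : List Bool) :
    let w := true :: (replicate k true ++ false :: y)
    rate α β ((sprout w 0).drop 1).dropLast ((sprout w (target w 0)).drop 1).dropLast = α := by
  intro w
  have h₁ : sprout w 0 = true :: false :: (replicate k true ++ false :: y) :=
    sprout_of_eq_append_cons (x := []) rfl rfl
  have h₂ : sprout w (k + 1) = true :: true :: (replicate k true ++ false :: y) := by
    rw [sprout_of_eq_append_cons (x := replicate (k + 1) true) (b := false) (y := y)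
      (by simp [w, replicate_succ]) (by simp)]
    simp [replicate_succ, replicate_append_cons]
  rw [target_first, h₁, h₂]
  exact rate_trim_injection α β true (by simp)

lemma rate_sprout_target_last (α β : ℝ) (x : List Bool) (m : ℕ) :
    let w := x ++ true :: replicate (m + 1) false
    rate α β ((sprout w (x.length + m + 1)).drop 1).dropLast
      ((sprout w (target w (x.length + m + 1))).drop 1).dropLast = β := by
  intro w
  have h₁ : sprout w (x.length + m + 1) = (x ++ true :: replicate m false) ++ [true, false] :=
    sprout_of_eq_append_cons (x := x ++ true :: replicate m false) (b := false) (y := [])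
      (by simp [w, replicate_succ'])
      (by simp only [length_append, length_cons, length_replicate]; omega)
  have h₂ : sprout w x.length = (x ++ true :: replicate m false) ++ [false, false] := by
    rw [sprout_of_eq_append_cons rfl rfl]
    simp [replicate_succ', replicate_append_cons]
  rw [target_last, h₁, h₂]
  exact rate_trim_extraction α β (by simp) false

lemma rate_sprout_target_of_true (α β : ℝ) (x z : List Bool) (g : ℕ) (hz : z ≠ []) :
    let w := x ++ true :: (replicate g false ++ true :: z)
    rate α β ((sprout w (x.length + g + 1)).drop 1).dropLast
      ((sprout w (target w (x.length + g + 1))).drop 1).dropLast = 1 := by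
  intro w
  have h₁ : sprout w (x.length + g + 1) = (x ++ true :: replicate g false) ++ true :: false :: z :=
    sprout_of_eq_append_cons (x := x ++ true :: replicate g false) (b := true) (y := z)
      (by simp [w]) (by simp only [length_append, length_cons, length_replicate]; omega)
  have h₂ : sprout w x.length = (x ++ true :: replicate g false) ++ false :: true :: z := by
    rw [sprout_of_eq_append_cons rfl rfl]
    simp [replicate_append_cons]
  rw [target_of_true, h₁, h₂]
  exact rate_trim_hop α β (by simp) hz

lemma rate_sprout_target_of_false (α β : ℝ) {x : List Bool} (hx : x ≠ []) (y : List Bool)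
    (q : ℕ) :
    let w := x ++ false :: (replicate q true ++ false :: y)
    rate α β ((sprout w x.length).drop 1).dropLast
      ((sprout w (target w x.length)).drop 1).dropLast = 1 := by
  intro w
  have h₁ : sprout w x.length = x ++ true :: false :: (replicate q true ++ false :: y) :=
    sprout_of_eq_append_cons rfl rfl
  have h₂ :
      sprout w (x.length + 1 + q) = x ++ false :: true :: (replicate q true ++ false :: y) := by
    rw [sprout_of_eq_append_cons (x := x ++ false :: replicate q true) (b := false) (y := y)
      (by simp [w]) (by simp only [length_append, length_cons, length_replicate]; omega)]
    simp [replicate_append_cons]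
  rw [target_of_false, h₁, h₂]
  exact rate_trim_hop α β hx (by simp)

lemma rate_sprout_target (α β : ℝ) {w : List Bool} (hhead : w.head? = some true)
    (hlast : w.getLast? = some false) {i : ℕ} (hi : i < w.length) :
    rate α β ((sprout w i).drop 1).dropLast ((sprout w (target w i)).drop 1).dropLast =
      if i = 0 then α else if i + 1 = w.length then β else 1 := by
  obtain ⟨x, b, z, rfl, rfl⟩ : ∃ x b z, w = x ++ b :: z ∧ x.length = i :=
    ⟨w.take i, w[i], w.drop (i + 1), by simp [getElem_cons_drop], by simp only [length_take]; omega⟩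
  have true_mem_x (hx : x ≠ []) : true ∈ x := by
    obtain ⟨a, x, rfl⟩ := exists_cons_of_ne_nil hx
    simp_all
  have false_mem_z (hz : z ≠ []) : false ∈ z := by
    obtain ⟨z, c, rfl⟩ : ∃ z' c, z = z' ++ [c] :=
      ⟨z.dropLast, z.getLast hz, (dropLast_append_getLast hz).symm⟩
    rw [show x ++ b :: (z ++ [c]) = (x ++ b :: z) ++ [c] by simp, getLast?_concat] at hlast
    simp_all
  rcases eq_or_ne x [] with rfl | hx
  · obtain rfl : b = true := by simpa using hhead
    have hz : z ≠ [] := by rintro rfl; simp at hlast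
    obtain ⟨k, y, rfl⟩ := exists_eq_replicate_append_cons (false_mem_z hz)
    simpa using rate_sprout_target_first α β k y
  rcases eq_or_ne z [] with rfl | hz
  · obtain rfl : b = false := by simpa using hlast
    obtain ⟨x, m, rfl⟩ := exists_eq_append_cons_replicate (true_mem_x hx)
    simpa [replicate_succ', add_assoc] using rate_sprout_target_last α β x m
  cases b
  · obtain ⟨q, y, rfl⟩ := exists_eq_replicate_append_cons (false_mem_z hz)
    simpa [hx] using rate_sprout_target_of_false α β hx y q
  · obtain ⟨x, g, rfl⟩ := exists_eq_append_cons_replicate (true_mem_x hx)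
    simpa [add_assoc, hz] using rate_sprout_target_of_true α β x z g hz

namespace PTree

lemma numLeaves_pos (T : PTree) : 0 < T.numLeaves := by
  induction T with
  | leaf => exact Nat.one_pos
  | node l r ihl _ => exact Nat.add_pos_left ihl _

lemma length_dirsAux (T : PTree) (b : Bool) : (T.dirsAux b).length = T.numLeaves := by
  induction T generalizing b with
  | leaf => rfl
  | node l r ihl ihr => simp [dirsAux, numLeaves, ihl, ihr]

lemma head?_dirsAux_true (T : PTree) : (T.dirsAux true).head? = some true := by
  induction T with
  | leaf => rfl
  | node l r ihl _ => simp [dirsAux, ihl]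

lemma getLast?_dirsAux_false (T : PTree) : (T.dirsAux false).getLast? = some false := by
  induction T with
  | leaf => rfl
  | node l r _ ihr => simp [dirsAux, ihr]

lemma dirs_node (l r : PTree) (b : Bool) : (node l r).dirs = (node l r).dirsAux b := rfl

end PTree

namespace MTree

lemma numLeaves_forget (M : MTree) : M.forget.numLeaves = M.collapseT.numLeaves + 1 := by
  induction M with
  | mark => rfl
  | nodeL l r ih => simp only [forget, collapseT, PTree.numLeaves, ih]; omega
  | nodeR l r ih => simp only [forget, collapseT, PTree.numLeaves, ih]; omega

lemma markIdx_lt_numLeaves (M : MTree) : M.markIdx < M.collapseT.numLeaves := by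
  induction M with
  | mark => simp [markIdx, collapseT, PTree.numLeaves]
  | nodeL l r ih => simp only [markIdx, collapseT, PTree.numLeaves]; omega
  | nodeR l r ih => simp only [markIdx, collapseT, PTree.numLeaves]; omega

lemma lCount_forget (M : MTree) :
    M.forget.lCount = lCountM M + if M.markIdx = 0 then 1 else 0 := by
  induction M with
  | mark => rfl
  | nodeL l r ih => simp only [forget, PTree.lCount, ih, lCountM, markIdx]; grind
  | nodeR l r ih =>
    have := l.numLeaves_pos
    simp only [forget, PTree.lCount, lCountM, markIdx]; grind

lemma rCount_forget (M : MTree) :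
    M.forget.rCount = rCountM M + if M.markIdx + 1 = M.collapseT.numLeaves then 1 else 0 := by
  induction M with
  | mark => rfl
  | nodeL l r ih =>
    have := l.markIdx_lt_numLeaves
    have := r.numLeaves_pos
    simp only [forget, PTree.rCount, rCountM, markIdx, collapseT, PTree.numLeaves]
    grind
  | nodeR l r ih =>
    simp only [forget, PTree.rCount, ih, rCountM, markIdx, collapseT, PTree.numLeaves]
    grind

lemma dirsAux_forget (M : MTree) (b : Bool) :
    M.forget.dirsAux b = sprout (M.collapseT.dirsAux b) M.markIdx := by
  induction M generalizing b with
  | mark => rfl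
  | nodeL l r ih =>
    rw [forget, collapseT, PTree.dirsAux, PTree.dirsAux, ih, markIdx,
      sprout_append_of_lt (by rw [PTree.length_dirsAux]; exact l.markIdx_lt_numLeaves)]
  | nodeR l r ih =>
    rw [forget, collapseT, PTree.dirsAux, PTree.dirsAux, ih, markIdx,
      ← PTree.length_dirsAux l true, sprout_append_length_add]

lemma dirs_forget (M : MTree) : M.forget.dirs = sprout M.collapseT.dirs M.markIdx := by
  cases M with
  | mark => rfl
  | nodeL l r => exact dirsAux_forget (.nodeL l r) true
  | nodeR l r => exact dirsAux_forget (.nodeR l r) true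

end MTree

lemma collapseT_expand (T : PTree) (i : ℕ) : (expand T i).collapseT = T := by
  induction T generalizing i with
  | leaf => rfl
  | node l r ihl ihr => unfold expand; split_ifs <;> simp [MTree.collapseT, ihl, ihr]

lemma markIdx_expand {T : PTree} {i : ℕ} (hi : i < T.numLeaves) : (expand T i).markIdx = i := by
  induction T generalizing i with
  | leaf => simp only [PTree.numLeaves, Nat.lt_one_iff] at hi; exact hi.symm
  | node l r ihl ihr =>
    simp only [PTree.numLeaves] at hi
    unfold expand
    split_ifs with h
    · exact ihl h
    · simp only [MTree.markIdx, ihr (show i - l.numLeaves < r.numLeaves by omega)]; omega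

lemma zpow_neg_succ_mul_self {G₀ : Type*} [GroupWithZero G₀] (a : G₀) {c : ℕ} (hc : c ≠ 0) :
    a ^ (-((c + 1 : ℕ) : ℤ)) * a = a ^ (-(c : ℤ)) := by
  rcases eq_or_ne a 0 with rfl | ha
  · simp [zero_zpow _ (by omega : -(c : ℤ) ≠ 0)]
  · rw [← zpow_add_one₀ ha]
    push_cast
    ring_nf

lemma muHat_eq_mu_mul (α β : ℝ) {M : MTree} (hM : 2 ≤ M.collapseT.numLeaves) :
    muHat α β M = mu α β M.forget *
      if M.markIdx = 0 then α else if M.markIdx + 1 = M.collapseT.numLeaves then β else 1 := by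
  have hl : lCountM M ≠ 0 := by cases M <;> simp_all [lCountM, MTree.collapseT, PTree.numLeaves]
  have hr : rCountM M ≠ 0 := by cases M <;> simp_all [rCountM, MTree.collapseT, PTree.numLeaves]
  rw [muHat, mu, M.lCount_forget, M.rCount_forget]
  split_ifs with h₀ hN hN <;> try omega
  · rw [add_zero, mul_right_comm, zpow_neg_succ_mul_self α hl]
  · rw [add_zero, mul_assoc, zpow_neg_succ_mul_self β hr]
  · simp

lemma rate_red_forget_piM (α β : ℝ) {M : MTree} (hM : 2 ≤ M.collapseT.numLeaves) :
    rate α β M.forget.red (piM M).forget.red =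
      if M.markIdx = 0 then α else if M.markIdx + 1 = M.collapseT.numLeaves then β else 1 := by
  obtain ⟨l, r, hT⟩ : ∃ l r, M.collapseT = .node l r := by
    cases h : M.collapseT with
    | leaf => simp [h, PTree.numLeaves] at hM
    | node l r => exact ⟨l, r, rfl⟩
  have hlen : M.collapseT.dirs.length = M.collapseT.numLeaves := by
    rw [hT, PTree.dirs_node l r true, PTree.length_dirsAux]
  have hhead : M.collapseT.dirs.head? = some true := by
    rw [hT, PTree.dirs_node l r true, PTree.head?_dirsAux_true]
  have hlast : M.collapseT.dirs.getLast? = some false := by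
    rw [hT, PTree.dirs_node l r false, PTree.getLast?_dirsAux_false]
  have hi : M.markIdx < M.collapseT.dirs.length := hlen ▸ M.markIdx_lt_numLeaves
  have hj := target_lt_length (mem_of_getLast? hlast) hi
  rw [hlen] at hj
  rw [PTree.red, PTree.red, M.dirs_forget, piM, MTree.dirs_forget, collapseT_expand,
    markIdx_expand hj, rate_sprout_target α β hhead hlast hi, hlen]

end

theorem muHat_eq_mu_mul_rate_general (n : ℕ) (hn : 1 ≤ n) (α β : ℝ)
    (M : MTree) (hM : M.forget.numLeaves = n + 2) (C C' : List Bool)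
    (hC' : M.forget.red = C') (hC : (piM M).forget.red = C) :
    muHat α β M = mu α β M.forget * rate α β C' C := by
  have hN : 2 ≤ M.collapseT.numLeaves := by have := M.numLeaves_forget; omega
  rw [← hC', ← hC, rate_red_forget_piM α β hN, muHat_eq_mu_mul α β hN]

/-- for a marked tree `T̂ ∈ F(C' → C)`,
`μ̂(T̂) = μ(f(T̂)) · W(C' → C)`. -/
theorem muHat_eq_mu_mul_rate (n : ℕ) (hn : 1 ≤ n) (α β : ℝ)
    (hα : α ∈ Set.Ioc (0:ℝ) 1) (hβ : β ∈ Set.Ioc (0:ℝ) 1)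
    (M : MTree) (hM : M.forget.numLeaves = n + 2) (C C' : List Bool)
    (hC' : M.forget.red = C') (hC : (piM M).forget.red = C) :
    muHat α β M = mu α β M.forget * rate α β C' C :=
  muHat_eq_mu_mul_rate_general n hn α β M hM C C' hC' hC
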